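/- arXiv:math/0108185 — 3 statements merged into one kernel-verified Lean document; each statement's English description precedes it below -/
import Mathlib

section
/- Let G ⊂ U(V) be a finite complex reflection group, H a reflection hyperplane with pointwise stabilizer G_H of order e_H, and χ_H the restriction of the determinant character to G_H. If a polynomial p on V transforms under G_H according to the character χ_H^{-i} for some i ∈ {1, …, e_H − 1}, then p is divisible by α_H^i, where α_H ∈ V* is a linear functional with kernel H. -/
/-!
An isometry `g` fixing the hyperplane `ker ℓ` pointwise is the transvection `x ↦ x + ℓ x • w`
with `w = g u - u`, `ℓ u = 1`; so `ℓ ∘ g = det g • ℓ`, and `det g = 1 + ℓ w = 1` forces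
`w ⊥ ker ℓ ∋ w`, i.e. `g = 1`. Thus `det` embeds `G_H` into the roots of unity, so for
`0 < j < e_H` some `g ∈ G_H` has `det(g)^j ≠ 1`. A polynomial transforming by `det^{-j}` must
therefore vanish on `H`; by the Nullstellensatz it is `α q`, where `q` transforms by
`det^{-(j-1)}`, and induction on `j` finishes the proof.
-/

open MvPolynomial

namespace LinearMap

variable {R K V : Type*}

theorem eq_transvection_of_fixes_ker [CommRing R] [AddCommGroup V] [Module R V]
    {f : V →ₗ[R] V} {ℓ : Module.Dual R V} (hf : ∀ v, ℓ v = 0 → f v = v) {u : V} (hu : ℓ u = 1) :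
    f = transvection ℓ (f u - u) := by
  ext x
  have hx : f (x - ℓ x • u) = x - ℓ x • u := hf _ (by simp [hu])
  rw [map_sub, map_smul] at hx
  rw [transvection.apply]
  linear_combination (norm := module) hx

variable [Field K] [AddCommGroup V] [Module K V]

theorem dual_apply_eq_det_mul_of_fixes_ker [FiniteDimensional K V] {f : V →ₗ[K] V}
    {ℓ : Module.Dual K V} (hf : ∀ v, ℓ v = 0 → f v = v) (x : V) :
    ℓ (f x) = LinearMap.det f * ℓ x := by
  obtain rfl | hℓ := eq_or_ne ℓ 0
  · simp
  obtain ⟨u, hu⟩ := LinearMap.surjective hℓ 1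
  rw [eq_transvection_of_fixes_ker hf hu, transvection.det, transvection.apply]
  simp only [map_add, map_smul, smul_eq_mul]
  ring

end LinearMap

namespace LinearIsometryEquiv

@[simps]
def toLinearEquivHom {R E : Type*} [Semiring R] [SeminormedAddCommGroup E] [Module R E] :
    (E ≃ₗᵢ[R] E) →* (E ≃ₗ[R] E) where
  toFun := toLinearEquiv
  map_one' := rfl
  map_mul' _ _ := rfl

variable {𝕜 E : Type*} [RCLike 𝕜] [NormedAddCommGroup E] [InnerProductSpace 𝕜 E]
  [FiniteDimensional 𝕜 E]

theorem eq_one_of_fixes_ker_of_det_eq_one {g : E ≃ₗᵢ[𝕜] E} {ℓ : Module.Dual 𝕜 E}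
    (hg : ∀ v, ℓ v = 0 → g v = v) (hdet : LinearEquiv.det g.toLinearEquiv = 1) : g = 1 := by
  obtain rfl | hℓ := eq_or_ne ℓ 0
  · ext v; exact hg v rfl
  obtain ⟨u, hu⟩ := LinearMap.surjective hℓ 1
  have htrans := LinearMap.eq_transvection_of_fixes_ker
    (f := g.toLinearEquiv.toLinearMap) hg hu
  have hw : ℓ (g u - u) = 0 := by
    rw [← Units.val_eq_one, LinearEquiv.coe_det, htrans, LinearMap.transvection.det] at hdet
    simpa using hdet
  -- `g` preserves inner products and fixes `ker ℓ ∋ g u - u`, so `g u - u ⊥ ker ℓ`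
  have hw0 : g u - u = 0 := by
    rw [← inner_self_eq_zero (𝕜 := 𝕜), inner_sub_right, ← g.inner_map_map (g u - u) u, hg _ hw,
      sub_self]
  ext x
  simpa [LinearMap.transvection.apply, hw0] using LinearMap.congr_fun htrans x

end LinearIsometryEquiv

theorem MonoidHom.exists_apply_pow_ne_one {Γ K : Type*} [Monoid Γ] [CommRing K] [IsDomain K]
    {χ : Γ →* Kˣ} (hχ : Function.Injective χ) {m : ℕ} (hm0 : 0 < m) (hm : m < Nat.card Γ) :
    ∃ g, χ g ^ m ≠ 1 := by
  by_contra! h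
  have : NeZero m := ⟨hm0.ne'⟩
  have hinj : Function.Injective fun g =>
      (⟨χ g, (mem_rootsOfUnity m (χ g)).mpr (h g)⟩ : rootsOfUnity m K) :=
    fun a b hab => hχ (congrArg Subtype.val hab)
  have := (Nat.card_le_card_of_injective _ hinj).trans (card_rootsOfUnity K m)
  omega

namespace MvPolynomial

variable {R K σ : Type*}

theorem IsHomogeneous.exists_dual_eval_eq [CommSemiring R] {α : MvPolynomial σ R}
    (hα : α.IsHomogeneous 1) : ∃ ℓ : Module.Dual R (σ → R), ∀ x, ℓ x = eval x α := by
  have hspan : α ∈ Submodule.span R (Set.range X) := by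
    rw [← homogeneousSubmodule_one_eq_span_X]; exact hα
  clear hα
  induction hspan using Submodule.span_induction with
  | mem _ hq =>
    obtain ⟨i, rfl⟩ := hq
    exact ⟨LinearMap.proj i, fun x => by simp⟩
  | zero => exact ⟨0, fun x => by simp⟩
  | add _ _ _ _ h h' =>
    obtain ⟨ℓ, hℓ⟩ := h
    obtain ⟨ℓ', hℓ'⟩ := h'
    exact ⟨ℓ + ℓ', fun x => by simp [hℓ, hℓ']⟩
  | smul c _ _ h =>
    obtain ⟨ℓ, hℓ⟩ := h
    exact ⟨c • ℓ, fun x => by simp [hℓ]⟩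

theorem IsHomogeneous.prime_of_ne_zero [Field K] {α : MvPolynomial σ K}
    (hα : α.IsHomogeneous 1) (hα0 : α ≠ 0) : Prime α := by
  rw [← irreducible_iff_prime]
  refine irreducible_of_totalDegree_eq_one (hα.totalDegree hα0) fun r hr => ?_
  obtain ⟨d, hd⟩ := ne_zero_iff.mp hα0
  exact (ne_zero_of_dvd_ne_zero hd (hr d)).isUnit

theorem dvd_of_prime_of_forall_eval_eq_zero [Field K] [IsAlgClosed K] [Finite σ]
    {α p : MvPolynomial σ K} (hα : Prime α) (h : ∀ x, eval x α = 0 → eval x p = 0) :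
    α ∣ p := by
  have := (Ideal.span_singleton_prime hα.ne_zero).mpr hα
  rw [← Ideal.mem_span_singleton, ← IsPrime.vanishingIdeal_zeroLocus (K := K) (Ideal.span {α})]
  intro x hx
  simpa using h x (by simpa using hx α (Ideal.mem_span_singleton_self α))

theorem exists_eval_eq_eval_linearMap [CommSemiring R] [Fintype σ] {τ : Type*}
    (M : (σ → R) →ₗ[R] (τ → R)) (q : MvPolynomial τ R) :
    ∃ Q : MvPolynomial σ R, ∀ x, eval x Q = eval (M x) q := by
  classical
  refine ⟨bind₁ (fun k => ∑ j, C (M (fun i => if j = i then 1 else 0) k) * X j) q, fun x => ?_⟩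
  change aeval x _ = aeval (M x) q
  rw [aeval_bind₁, M.pi_apply_eq_sum_univ x]
  congr 1
  ext k
  simp [mul_comm]

theorem pow_dvd_of_forall_eval_comp_eq [Field K] [IsAlgClosed K] [Fintype σ] {ι : Type*}
    {α : MvPolynomial σ K} (hα : Prime α) (L : ι → (σ → K) →ₗ[K] (σ → K)) (c : ι → Kˣ)
    (hαL : ∀ t x, eval (L t x) α = c t * eval x α) (hfix : ∀ t x, eval x α = 0 → L t x = x)
    {j : ℕ} (hc : ∀ m, 0 < m → m ≤ j → ∃ t, c t ^ m ≠ 1) {p : MvPolynomial σ K}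
    (hp : ∀ t x, eval (L t x) p = c t ^ j * eval x p) : α ^ j ∣ p := by
  induction j generalizing p with
  | zero => simp
  | succ j ih =>
    have hvan : ∀ x, eval x α = 0 → eval x p = 0 := by
      intro x hx
      obtain ⟨t, ht⟩ := hc (j + 1) j.succ_pos le_rfl
      have hpx := hp t x
      rw [hfix t x hx] at hpx
      by_contra hne
      exact ht (Units.val_eq_one.mp (mul_right_cancel₀ hne (by simpa using hpx.symm)))
    obtain ⟨q, rfl⟩ := dvd_of_prime_of_forall_eval_eq_zero hα hvan
    rw [pow_succ']
    refine mul_dvd_mul_left α (ih (fun m hm0 hm => hc m hm0 (hm.trans j.le_succ)) fun t x => ?_)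
    obtain ⟨Q, hQ⟩ := exists_eval_eq_eval_linearMap (L t) q
    -- the laws of `α` and of `α * q` give `α * (q ∘ L t - c t ^ j • q) = 0`
    have hQq : α * (Q - C ((c t : K) ^ j) * q) = 0 := by
      apply MvPolynomial.funext
      intro y
      have hpy := hp t y
      simp only [eval_mul, hαL] at hpy
      simp only [eval_mul, eval_sub, eval_C, hQ, map_zero]
      apply mul_left_cancel₀ (Units.ne_zero (c t))
      linear_combination hpy
    have := sub_eq_zero.mp ((mul_eq_zero.mp hQq).resolve_left hα.ne_zero)
    rw [← hQ, this]
    simp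

end MvPolynomial

theorem stmt1_general (n : ℕ)
    (G : Subgroup (EuclideanSpace ℂ (Fin n) ≃ₗᵢ[ℂ] EuclideanSpace ℂ (Fin n)))
    (H : Submodule ℂ (EuclideanSpace ℂ (Fin n)))
    (GH : Subgroup (EuclideanSpace ℂ (Fin n) ≃ₗᵢ[ℂ] EuclideanSpace ℂ (Fin n)))
    -- `G_H` is the pointwise stabilizer of `H` in `G`
    (hGH : ∀ x, x ∈ GH ↔ x ∈ G ∧ ∀ v ∈ H, x v = v)
    (eH : ℕ) (heH : eH = Nat.card GH)
    -- a linear functional `α_H` with kernel `H`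
    (α : MvPolynomial (Fin n) ℂ) (hα1 : α.IsHomogeneous 1) (hα0 : α ≠ 0)
    (hker : ∀ x : EuclideanSpace ℂ (Fin n), eval x α = 0 ↔ x ∈ H)
    (i : ℕ) (hi2 : i ≤ eH - 1)
    (p : MvPolynomial (Fin n) ℂ)
    -- `p` transforms under `G_H` according to `χ_H^{-i}`, i.e. `p^g = det(g)^{-i} p`
    (hp : ∀ g : GH, ∀ x : EuclideanSpace ℂ (Fin n),
      eval ((g : EuclideanSpace ℂ (Fin n) ≃ₗᵢ[ℂ] EuclideanSpace ℂ (Fin n))⁻¹ x) p =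
        (((LinearEquiv.det
            (g : EuclideanSpace ℂ (Fin n) ≃ₗᵢ[ℂ] EuclideanSpace ℂ (Fin n)).toLinearEquiv :
              ℂˣ) : ℂ))⁻¹ ^ i * eval x p) :
    α ^ i ∣ p := by
  let e := WithLp.linearEquiv 2 ℂ (Fin n → ℂ)
  obtain ⟨ℓ, hℓ⟩ := hα1.exists_dual_eval_eq
  have hfix : ∀ g ∈ GH, ∀ v, (ℓ ∘ₗ e.toLinearMap) v = 0 → g v = v := fun g hg v hv =>
    ((hGH g).mp hg).2 v ((hker v).mp (by simpa [hℓ, e] using hv))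
  let χ : GH →* ℂˣ :=
    LinearEquiv.det.comp (LinearIsometryEquiv.toLinearEquivHom.comp GH.subtype)
  have hχ : Function.Injective χ := (injective_iff_map_eq_one χ).mpr fun g hg =>
    Subtype.ext (LinearIsometryEquiv.eq_one_of_fixes_ker_of_det_eq_one (hfix g g.2)
      (by simpa [χ] using hg))
  refine MvPolynomial.pow_dvd_of_forall_eval_comp_eq (hα1.prime_of_ne_zero hα0)
    (fun g : GH => e.conj (g⁻¹ : _ ≃ₗᵢ[ℂ] _).toLinearEquiv.toLinearMap) (fun g => (χ g)⁻¹)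
    (fun g x => ?_) (fun g x hx => ?_) (fun m hm0 hm => ?_) (fun g x => ?_)
  · have := LinearMap.dual_apply_eq_det_mul_of_fixes_ker (hfix _ (g⁻¹).2) (WithLp.toLp 2 x)
    rw [← map_inv]
    simpa [e, χ, hℓ] using this
  · simpa [e] using congrArg WithLp.ofLp
      (hfix _ (g⁻¹).2 (WithLp.toLp 2 x) (by simpa [e, hℓ] using hx))
  · obtain ⟨g, hg⟩ := χ.exists_apply_pow_ne_one hχ hm0 (by omega)
    exact ⟨g, by simpa using hg⟩
  · simpa [e, χ] using hp g (WithLp.toLp 2 x)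

/-- If a polynomial `p` transforms under the cyclic pointwise stabilizer
`G_H` (of order `e_H`) of a reflection hyperplane `H` according to the character
`χ_H^{-i}` (where `χ_H` is the restriction of the determinant character) for some
`i ∈ {1,…,e_H−1}`, then `p` is divisible by `α_H^i`, where `α_H` is a linear form with
kernel `H`. -/
theorem stmt1 (n : ℕ)
    (G : Subgroup (EuclideanSpace ℂ (Fin n) ≃ₗᵢ[ℂ] EuclideanSpace ℂ (Fin n))) [Finite G]
    -- `G` is a complex reflection group: it is generated by its complex reflections
    (hreflgen : Subgroup.closure
      {x : EuclideanSpace ℂ (Fin n) ≃ₗᵢ[ℂ] EuclideanSpace ℂ (Fin n) | x ∈ G ∧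
        IsOfFinOrder x ∧
        Module.finrank ℂ (LinearMap.ker (x.toLinearEquiv.toLinearMap - LinearMap.id)) =
          n - 1} = G)
    (H : Submodule ℂ (EuclideanSpace ℂ (Fin n)))
    (hhyp : Module.finrank ℂ H = n - 1)
    (GH : Subgroup (EuclideanSpace ℂ (Fin n) ≃ₗᵢ[ℂ] EuclideanSpace ℂ (Fin n)))
    -- `G_H` is the pointwise stabilizer of `H` in `G`
    (hGH : ∀ x, x ∈ GH ↔ x ∈ G ∧ ∀ v ∈ H, x v = v)
    -- `H` is a reflection hyperplane
    (hGHne : GH ≠ ⊥)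
    (eH : ℕ) (heH : eH = Nat.card GH)
    -- a linear functional `α_H` with kernel `H`
    (α : MvPolynomial (Fin n) ℂ) (hα1 : α.IsHomogeneous 1) (hα0 : α ≠ 0)
    (hker : ∀ x : EuclideanSpace ℂ (Fin n), eval x α = 0 ↔ x ∈ H)
    (i : ℕ) (hi1 : 1 ≤ i) (hi2 : i ≤ eH - 1)
    (p : MvPolynomial (Fin n) ℂ)
    -- `p` transforms under `G_H` according to `χ_H^{-i}`, i.e. `p^g = det(g)^{-i} p`
    (hp : ∀ g : GH, ∀ x : EuclideanSpace ℂ (Fin n),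
      eval ((g : EuclideanSpace ℂ (Fin n) ≃ₗᵢ[ℂ] EuclideanSpace ℂ (Fin n))⁻¹ x) p =
        (((LinearEquiv.det
            (g : EuclideanSpace ℂ (Fin n) ≃ₗᵢ[ℂ] EuclideanSpace ℂ (Fin n)).toLinearEquiv :
              ℂˣ) : ℂ))⁻¹ ^ i * eval x p) :
    α ^ i ∣ p :=
  stmt1_general n G H GH hGH eH heH α hα1 hα0 hker i hi2 p hp
end

section
/- Let G be a finite complex reflection group and τ an irreducible representation of G. The scalar c_τ(k) (value of the central element z(k) on τ) is identically zero as a function of the parameters k if and only if τ is the trivial representation. -/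
/-!
If `τ` is trivial, `z(k)` acts through the sums `∑_{h ∈ G_H} χ_H(h)^i`, which vanish for
`0 < i < e_H` because `χ_H^i` is then a nontrivial character of `G_H`; hence `c_τ(k) = 0`.

Conversely, take `k ≡ 1`. Since `χ_H` is faithful, the geometric sums `∑_{i=1}^{e_H-1} χ_H(h)^i`
equal `e_H - 1` at `h = 1` and `-1` elsewhere, so `z(1)` acts by `∑_H (e_H - ∑_{h ∈ G_H} τ(h))`.
This operator commutes with `τ`, so by Schur it is the scalar `c_τ(1) = 0`. As the average over
`G_H` is a projection onto the invariants `V^{G_H}`, its trace is `∑_H e_H · codim V^{G_H}`,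
a sum of nonnegative integers; so every `G_H` acts trivially, and the `G_H` generate `G`.
-/

open Finset

section FiniteGroup

variable {S : Type*} [Group S] [Fintype S]

theorem sum_pow_eq_zero_of_injective {R : Type*} [CommRing R] [IsDomain R] (ψ : S →* R)
    (hψ : Function.Injective ψ) {i : ℕ} (hi₀ : 0 < i) (hi : i < Nat.card S) :
    ∑ s, ψ s ^ i = 0 := by
  have := isCyclic_of_injective_ringHom ψ hψ
  refine sum_hom_units_eq_zero (ψ ^ i) fun h => ?_
  have hdvd : Nat.card S ∣ i := by
    rw [← IsCyclic.exponent_eq_card]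
    exact Monoid.exponent_dvd_of_forall_pow_eq_one fun s => hψ (by simpa using congr($h s))
  exact absurd (Nat.le_of_dvd hi₀ hdvd) hi.not_ge

theorem sum_Ico_pow_eq_of_injective {R : Type*} [CommRing R] [IsDomain R] [DecidableEq S]
    (ψ : S →* R) (hψ : Function.Injective ψ) (s : S) :
    ∑ i ∈ Ico 1 (Nat.card S), ψ s ^ i = (if s = 1 then (Nat.card S : R) else 0) - 1 := by
  have hgeom : ∑ i ∈ range (Nat.card S), ψ s ^ i = if s = 1 then (Nat.card S : R) else 0 := by
    split_ifs with hs
    · simp [hs]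
    · have hψs : ψ s - 1 ≠ 0 := sub_ne_zero.mpr fun h => hs (hψ (h.trans ψ.map_one.symm))
      have := geom_sum_mul (ψ s) (Nat.card S)
      rw [← map_pow, pow_card_eq_one', map_one, sub_self] at this
      exact (mul_eq_zero.mp this).resolve_right hψs
  rw [sum_Ico_eq_sub _ Nat.card_pos, hgeom]
  simp

end FiniteGroup

namespace Representation

variable {k G V : Type*} [Field k] [AddCommGroup V] [Module k V]

theorem sum_Ico_sum_pow_smul_eq [Group G] [Fintype G] (ψ : G →* k) (hψ : Function.Injective ψ)
    (σ : Representation k G V) :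
    ∑ i ∈ Ico 1 (Nat.card G), ∑ g, ψ g ^ i • σ g = (Nat.card G : k) • 1 - ∑ g, σ g := by
  classical
  simp only [sum_comm (s := Ico 1 _), ← sum_smul, sum_Ico_pow_eq_of_injective ψ hψ, sub_smul,
    ite_smul, zero_smul, one_smul, sum_sub_distrib, sum_ite_eq', mem_univ, if_true, map_one]

theorem trace_sum_eq_card_mul_finrank_invariants [Group G] [Fintype G] [CharZero k]
    [FiniteDimensional k V] (σ : Representation k G V) :
    LinearMap.trace k V (∑ g, σ g) = Nat.card G * Module.finrank k σ.invariants := by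
  let _ : Invertible (Fintype.card G : k) := invertibleOfNonzero (by simp)
  have havg : σ.averageMap = ⅟(Fintype.card G : k) • ∑ g, σ g := by
    simp [averageMap, GroupAlgebra.average, map_sum]
  have := σ.isProj_averageMap.trace
  rw [havg, map_smul, smul_eq_mul] at this
  rw [Nat.card_eq_fintype_card, ← this, ← mul_assoc, mul_invOf_self, one_mul]

theorem trace_card_smul_one_sub_sum_eq [Group G] [Fintype G] [CharZero k]
    [FiniteDimensional k V] (σ : Representation k G V) :
    LinearMap.trace k V ((Nat.card G : k) • 1 - ∑ g, σ g) =
      (Nat.card G * Module.finrank k (V ⧸ σ.invariants) : ℕ) := by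
  rw [map_sub, map_smul, LinearMap.trace_one, trace_sum_eq_card_mul_finrank_invariants,
    ← σ.invariants.finrank_quotient_add_finrank]
  push_cast
  ring

theorem eq_one_of_finrank_quotient_invariants_eq_zero [Group G] [FiniteDimensional k V]
    (σ : Representation k G V) (h : Module.finrank k (V ⧸ σ.invariants) = 0) (g : G) :
    σ g = 1 := by
  have htop : σ.invariants = ⊤ := by
    rw [← Submodule.Quotient.subsingleton_iff, ← Module.finrank_zero_iff (R := k)]
    exact h
  exact LinearMap.ext fun v => (htop ▸ Submodule.mem_top : v ∈ σ.invariants) g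

theorem exists_smul_eq_of_commute [IsAlgClosed k] [Monoid G] [FiniteDimensional k V]
    [Nontrivial V] (ρ : Representation k G V)
    (hirr : ∀ U : Submodule k V, (∀ g, ∀ v ∈ U, ρ g v ∈ U) → U = ⊥ ∨ U = ⊤)
    (f : Module.End k V) (hf : ∀ g, Commute (ρ g) f) : ∃ c : k, ∀ v, f v = c • v := by
  obtain ⟨c, hc⟩ := Module.End.exists_eigenvalue f
  refine ⟨c, fun v => ?_⟩
  have htop : f.eigenspace c = ⊤ :=
    (hirr _ fun g => Module.End.mapsTo_genEigenspace_of_comm (hf g).symm c 1).resolve_left hc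
  exact Module.End.mem_eigenspace_iff.mp (htop ▸ Submodule.mem_top)

end Representation

def Subgroup.homOfMulOn {W M : Type*} [Group W] [MulOneClass M] (S : Subgroup W) (χ : W → M)
    (hmul : ∀ h h', h ∈ S → h' ∈ S → χ (h * h') = χ h * χ h') (hone : χ 1 = 1) : S →* M where
  toFun h := χ h
  map_one' := hone
  map_mul' h h' := hmul h h' h.2 h'.2

theorem Subgroup.homOfMulOn_injective {W M : Type*} [Group W] [MulOneClass M] (S : Subgroup W)
    {χ : W → M} (hmul : ∀ h h', h ∈ S → h' ∈ S → χ (h * h') = χ h * χ h') (hone : χ 1 = 1)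
    (hinj : Set.InjOn χ S) : Function.Injective (S.homOfMulOn χ hmul hone) :=
  fun a b hab => Subtype.ext (hinj a.2 b.2 hab)

section ReflectionGroup

variable {W : Type*} [Group W] [Fintype W] {Hyp : Type*} [Fintype Hyp]
  (GH : Hyp → Subgroup W) [∀ H, DecidablePred (· ∈ GH H)]
  {K V : Type*} [Field K] [AddCommGroup V] [Module K V] (ρ : Representation K W V)

/-- The action on `V` of the central element `z(k)`; on an irreducible `V` it is `c_τ(k) • 1`. -/
def zOperator (χ : Hyp → W → K) (e : Hyp → ℕ) (k : Hyp → ℕ → K) : Module.End K V :=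
  ∑ H : Hyp, ∑ i ∈ Finset.Ico 1 (e H), ((e H : K) * k H i) • ((e H : K)⁻¹ •
    ∑ h ∈ Finset.univ.filter (· ∈ GH H), χ H h ^ i • ρ h)

theorem sum_filter_mem_eq_sum_subgroup {M : Type*} [AddCommMonoid M] (S : Subgroup W)
    [DecidablePred (· ∈ S)] (f : W → M) : ∑ h ∈ univ.filter (· ∈ S), f h = ∑ h : S, f h :=
  sum_subtype _ (by simp) f

variable {GH} {χ : Hyp → W → K}

theorem zOperator_eq_zero_of_forall_eq_one
    (hχmul : ∀ H : Hyp, ∀ h h' : W, h ∈ GH H → h' ∈ GH H → χ H (h * h') = χ H h * χ H h')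
    (hχone : ∀ H : Hyp, χ H 1 = 1) (hχinj : ∀ H : Hyp, Set.InjOn (χ H) (GH H))
    (htriv : ∀ g, ρ g = 1) (k : Hyp → ℕ → K) :
    zOperator GH ρ χ (fun H => Nat.card (GH H)) k = 0 := by
  refine sum_eq_zero fun H _ => sum_eq_zero fun i hi => ?_
  obtain ⟨hi₀, hi⟩ := mem_Ico.mp hi
  have hχsum : ∑ h ∈ univ.filter (· ∈ GH H), χ H h ^ i = 0 := by
    rw [sum_filter_mem_eq_sum_subgroup]
    exact sum_pow_eq_zero_of_injective _
      ((GH H).homOfMulOn_injective (hχmul H) (hχone H) (hχinj H)) hi₀ hi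
  simp only [htriv, ← sum_smul, hχsum, zero_smul, smul_zero]

theorem zOperator_one_eq [CharZero K]
    (hχmul : ∀ H : Hyp, ∀ h h' : W, h ∈ GH H → h' ∈ GH H → χ H (h * h') = χ H h * χ H h')
    (hχone : ∀ H : Hyp, χ H 1 = 1) (hχinj : ∀ H : Hyp, Set.InjOn (χ H) (GH H)) :
    zOperator GH ρ χ (fun H => Nat.card (GH H)) (fun _ _ => 1) =
      ∑ H, ((Nat.card (GH H) : K) • 1 - ∑ h ∈ univ.filter (· ∈ GH H), ρ h) := by
  refine sum_congr rfl fun H _ => ?_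
  have hcard : (Nat.card (GH H) : K) ≠ 0 := Nat.cast_ne_zero.mpr Nat.card_pos.ne'
  simp only [mul_one, smul_smul, mul_inv_cancel₀ hcard, one_smul,
    sum_filter_mem_eq_sum_subgroup]
  exact Representation.sum_Ico_sum_pow_smul_eq _
    ((GH H).homOfMulOn_injective (hχmul H) (hχone H) (hχinj H)) (ρ.comp (GH H).subtype)

theorem eq_one_of_trace_sum_card_smul_one_sub_sum_eq_zero [CharZero K] [FiniteDimensional K V]
    (htr : LinearMap.trace K V
      (∑ H, ((Nat.card (GH H) : K) • 1 - ∑ h ∈ univ.filter (· ∈ GH H), ρ h)) = 0)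
    (H : Hyp) (h : W) (hh : h ∈ GH H) : ρ h = 1 := by
  simp only [sum_filter_mem_eq_sum_subgroup, map_sum] at htr
  simp only [show ∀ H, ∑ s : GH H, ρ s = ∑ s, ρ.comp (GH H).subtype s from fun _ => rfl,
    Representation.trace_card_smul_one_sub_sum_eq] at htr
  rw [← Nat.cast_sum, Nat.cast_eq_zero, sum_eq_zero_iff] at htr
  have hcodim := (mul_eq_zero.mp (htr H (mem_univ H))).resolve_left Nat.card_pos.ne'
  exact Representation.eq_one_of_finrank_quotient_invariants_eq_zero _ hcodim ⟨h, hh⟩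

variable [MulAction W Hyp]

theorem sum_sum_filter_mem_conj {M : Type*} [AddCommMonoid M]
    (hGHconj : ∀ (g : W) (H : Hyp), GH (g • H) = (GH H).map (MulAut.conj g).toMonoidHom)
    (f : W → M) (g : W) :
    ∑ H, ∑ h ∈ univ.filter (· ∈ GH H), f (g * h * g⁻¹) =
      ∑ H, ∑ h ∈ univ.filter (· ∈ GH H), f h := by
  have hconj : ∀ H, ∑ h ∈ univ.filter (· ∈ GH H), f (g * h * g⁻¹) =
      ∑ h ∈ univ.filter (· ∈ GH (g • H)), f h := fun H =>
    sum_nbij' (fun h => g * h * g⁻¹) (fun h => g⁻¹ * h * g)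
      (fun h hh => by
        simp only [hGHconj, Subgroup.mem_map_equiv] at hh ⊢
        simpa [mul_assoc] using hh)
      (fun h hh => by
        simp only [hGHconj, Subgroup.mem_map_equiv] at hh ⊢
        simpa [mul_assoc] using hh)
      (fun h _ => by group) (fun h _ => by group) (fun _ _ => rfl)
  simp only [hconj]
  exact Fintype.sum_equiv (MulAction.toPerm g) _ _ fun _ => rfl

theorem commute_sum_smul_one_sub_sum
    (hGHconj : ∀ (g : W) (H : Hyp), GH (g • H) = (GH H).map (MulAut.conj g).toMonoidHom)
    (a : Hyp → K) (g : W) :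
    Commute (ρ g) (∑ H, (a H • 1 - ∑ h ∈ univ.filter (· ∈ GH H), ρ h)) := by
  rw [sum_sub_distrib]
  refine (Commute.sum_right _ _ _ fun H _ => (Commute.one_right _).smul_right _).sub_right ?_
  calc ρ g * ∑ H, ∑ h ∈ univ.filter (· ∈ GH H), ρ h
      = (∑ H, ∑ h ∈ univ.filter (· ∈ GH H), ρ (g * h * g⁻¹)) * ρ g := by
        simp only [mul_sum, sum_mul, ← map_mul, inv_mul_cancel_right]
    _ = _ := by rw [sum_sum_filter_mem_conj hGHconj]

end ReflectionGroup

theorem stmt5_general {W : Type*} [Group W] [Fintype W]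
    {Hyp : Type*} [Fintype Hyp] [MulAction W Hyp]
    (GH : Hyp → Subgroup W) [∀ H, DecidablePred (· ∈ GH H)]
    (hGHconj : ∀ (g : W) (H : Hyp), GH (g • H) = (GH H).map (MulAut.conj g).toMonoidHom)
    -- `G` is generated by the cyclic stabilizers `G_H`
    (hgen : Subgroup.closure (⋃ H : Hyp, (GH H : Set W)) = ⊤)
    (χ : Hyp → W → ℂ)
    -- `χ_H` is a faithful (hence generating) character of the cyclic group `G_H`
    (hχmul : ∀ H : Hyp, ∀ h h' : W, h ∈ GH H → h' ∈ GH H → χ H (h * h') = χ H h * χ H h')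
    (hχone : ∀ H : Hyp, χ H 1 = 1)
    (hχinj : ∀ H : Hyp, Set.InjOn (χ H) (GH H))
    (e : Hyp → ℕ) (he : ∀ H, e H = Nat.card (GH H))
    -- an irreducible finite-dimensional representation `τ` of `W`
    {Vτ : Type*} [AddCommGroup Vτ] [Module ℂ Vτ] [FiniteDimensional ℂ Vτ] [Nontrivial Vτ]
    (ρ : Representation ℂ W Vτ)
    (hirr : ∀ U : Submodule ℂ Vτ, (∀ (g : W), ∀ v ∈ U, ρ g v ∈ U) → U = ⊥ ∨ U = ⊤) :
    (∀ k : Hyp → ℕ → ℂ, (∀ (g : W) (H : Hyp) (i : ℕ), k (g • H) i = k H i) →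
      ∀ c : ℂ,
      (∀ v : Vτ,
        (∑ H : Hyp, ∑ i ∈ Finset.Ico 1 (e H),
          ((e H : ℂ) * k H i) • ((e H : ℂ)⁻¹ •
            ∑ h ∈ Finset.univ.filter (· ∈ GH H), χ H h ^ i • ρ h)) v = c • v) →
      c = 0) ↔
    (∀ g : W, ρ g = 1) := by
  obtain rfl : e = fun H => Nat.card (GH H) := funext he
  constructor
  · intro hyp
    set Z := ∑ H, ((Nat.card (GH H) : ℂ) • 1 - ∑ h ∈ univ.filter (· ∈ GH H), ρ h)
    obtain ⟨c, hc⟩ := ρ.exists_smul_eq_of_commute hirr Z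
      (commute_sum_smul_one_sub_sum ρ hGHconj _)
    have hc₀ : c = 0 := hyp (fun _ _ => 1) (fun _ _ _ => rfl) c fun v =>
      (LinearMap.congr_fun (zOperator_one_eq ρ hχmul hχone hχinj) v).trans (hc v)
    have htr : LinearMap.trace ℂ Vτ Z = 0 := by
      rw [show Z = 0 from LinearMap.ext fun v => by simp [hc, hc₀], map_zero]
    have hρ := eq_one_of_trace_sum_card_smul_one_sub_sum_eq_zero ρ htr
    refine fun g => DFunLike.congr_fun (MonoidHom.eq_of_eqOn_dense hgen (f := ρ) (g := 1) ?_) g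
    rintro h ⟨_, ⟨H, rfl⟩, hh⟩
    exact hρ H h hh
  · intro htriv k _ c hc
    obtain ⟨v, hv⟩ := exists_ne (0 : Vτ)
    have hcv : zOperator GH ρ χ (fun H => Nat.card (GH H)) k v = c • v := hc v
    rw [zOperator_eq_zero_of_forall_eq_one ρ hχmul hχone hχinj htriv, LinearMap.zero_apply,
      eq_comm, smul_eq_zero] at hcv
    exact hcv.resolve_right hv

/-- For an irreducible representation `τ` of a finite complex reflection
group, the scalar `c_τ(k)` of the central element `z(k)` on `τ` vanishes identically as a
function of the parameters `k` if and only if `τ` is the trivial representation. -/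
theorem stmt5 {W : Type*} [Group W] [Fintype W] [DecidableEq W]
    {Hyp : Type*} [Fintype Hyp] [MulAction W Hyp]
    (GH : Hyp → Subgroup W) [∀ H, DecidablePred (· ∈ GH H)]
    (hGHconj : ∀ (g : W) (H : Hyp), GH (g • H) = (GH H).map (MulAut.conj g).toMonoidHom)
    -- `G` is generated by the cyclic stabilizers `G_H`
    (hgen : Subgroup.closure (⋃ H : Hyp, (GH H : Set W)) = ⊤)
    (χ : Hyp → W → ℂ)
    (hχ : ∀ (g : W) (H : Hyp) (h : W), χ (g • H) (g * h * g⁻¹) = χ H h)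
    -- `χ_H` is a faithful (hence generating) character of the cyclic group `G_H`
    (hχmul : ∀ H : Hyp, ∀ h h' : W, h ∈ GH H → h' ∈ GH H → χ H (h * h') = χ H h * χ H h')
    (hχone : ∀ H : Hyp, χ H 1 = 1)
    (hχinj : ∀ H : Hyp, Set.InjOn (χ H) (GH H))
    (e : Hyp → ℕ) (he : ∀ H, e H = Nat.card (GH H))
    -- an irreducible finite-dimensional representation `τ` of `W`
    {Vτ : Type*} [AddCommGroup Vτ] [Module ℂ Vτ] [FiniteDimensional ℂ Vτ] [Nontrivial Vτ]
    (ρ : Representation ℂ W Vτ)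
    (hirr : ∀ U : Submodule ℂ Vτ, (∀ (g : W), ∀ v ∈ U, ρ g v ∈ U) → U = ⊥ ∨ U = ⊤) :
    (∀ k : Hyp → ℕ → ℂ, (∀ (g : W) (H : Hyp) (i : ℕ), k (g • H) i = k H i) →
      ∀ c : ℂ,
      (∀ v : Vτ,
        (∑ H : Hyp, ∑ i ∈ Finset.Ico 1 (e H),
          ((e H : ℂ) * k H i) • ((e H : ℂ)⁻¹ •
            ∑ h ∈ Finset.univ.filter (· ∈ GH H), χ H h ^ i • ρ h)) v = c • v) →
      c = 0) ↔
    (∀ g : W, ρ g = 1) :=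
  stmt5_general GH hGHconj hgen χ hχmul hχone hχinj e he ρ hirr
end

section
/- Let k be a regular parameter for a finite complex reflection group G (i.e. the positive-degree cohomology of the deformed De Rham complex vanishes). The intertwining operator 𝒱(k) characterized by: 𝒱(k) is completely homogeneous, equals the identity in degree 0, commutes with wedging by constant forms, and satisfies d(k)𝒱(k) = 𝒱(k)d(0), is unique and is a G-equivariant linear isomorphism of P ⊗ Λ^• V*; its restriction to P satisfies T_ξ(k)𝒱(k) = 𝒱(k)∂_ξ for all ξ ∈ V. -/
open MvPolynomial Finset

noncomputable section

/-- Polynomial differential forms (coefficients of the basis forms `dx_T`). -/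
abbrev KForm (n : ℕ) := Finset (Fin n) → MvPolynomial (Fin n) ℂ

/-- The basis form `p ⊗ dx_S`. -/
def ksingle {n : ℕ} (S : Finset (Fin n)) (p : MvPolynomial (Fin n) ℂ) : KForm n :=
  fun T => if T = S then p else 0

/-- The De Rham differential `d(0)` on polynomial differential forms. -/
def derham {n : ℕ} (ω : KForm n) : KForm n := fun T =>
  ∑ i ∈ T, ((-1 : ℂ) ^ (T.filter (· < i)).card) • (pderiv i) (ω (T.erase i))

/-- The deformed differential `d(k)` associated to the Dunkl operators `Top i`:
`T_ξ(k)p = c_ξ(d(k)p)` and `d(k)(p ⊗ ω) = d(k)(p) ∧ ω`. -/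
def dkOf {n : ℕ} (Top : Fin n → MvPolynomial (Fin n) ℂ →ₗ[ℂ] MvPolynomial (Fin n) ℂ)
    (ω : KForm n) : KForm n := fun T =>
  ∑ i ∈ T, ((-1 : ℂ) ^ (T.filter (· < i)).card) • Top i (ω (T.erase i))

/-- `ω` lies in `K^l_m = P_m ⊗ Λ^l V*`. -/
def InKlm {n : ℕ} (l m : ℕ) (ω : KForm n) : Prop :=
  ∀ S : Finset (Fin n), (S.card = l → (ω S).IsHomogeneous m) ∧ (S.card ≠ l → ω S = 0)

/-- The defining properties of the intertwiner `𝒱(k)`: it is completely homogeneous,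
equals the identity in degree `0`, commutes with wedging by constant forms, and
intertwines `d(0)` with `d(k)`. -/
def VProps {n : ℕ} (Top : Fin n → MvPolynomial (Fin n) ℂ →ₗ[ℂ] MvPolynomial (Fin n) ℂ)
    (V : KForm n →ₗ[ℂ] KForm n) : Prop :=
  (∀ (l m : ℕ) (ω : KForm n), InKlm l m ω → InKlm l m (V ω)) ∧
  (∀ (S : Finset (Fin n)) (c : ℂ), V (ksingle S (C c)) = ksingle S (C c)) ∧
  (∀ (p : MvPolynomial (Fin n) ℂ) (S : Finset (Fin n)),
    V (ksingle S p) = ksingle S (V (ksingle ∅ p) ∅)) ∧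
  (∀ ω : KForm n, dkOf Top (V ω) = V (derham ω))

/-!
The maps `W₀ = id`, `W_{m+1} = (m+1)⁻¹ ∑ᵢ Xᵢ Wₘ Tᵢ` satisfy `∂ᵢ W_{m+1} = Wₘ Tᵢ` in degree `m + 1`,
and by Euler's identity every polynomial intertwiner `u` (`Tᵢ u = u ∂ᵢ`, `u` fixing constants)
is a right inverse of `Wₘ` in each degree `m`. Regularity makes every `Wₘ` bijective on the
homogeneous polynomials of degree `m`: for `r` of degree `m + 1`, the preimages `qⱼ` of `∂ⱼ r`
under `Wₘ` form a `d(k)`-closed `1`-form, and the degree `m + 1` part `p` of a primitive has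
`W_{m+1} p = r`; injectivity then follows by counting dimensions. Hence `𝒱(k)` is `W⁻¹`, applied
coefficientwise, and it is unique; conjugating it by `g ∈ G` yields another intertwiner, so it is
`G`-equivariant.
-/

namespace MvPolynomial

theorem pderiv_pderiv_comm {σ R : Type*} [CommRing R] (i j : σ) (p : MvPolynomial σ R) :
    pderiv i (pderiv j p) = pderiv j (pderiv i p) := by
  classical
  have h : ⁅pderiv i, pderiv j⁆ = (0 : Derivation R (MvPolynomial σ R) (MvPolynomial σ R)) :=
    derivation_ext fun k => by
      rw [Derivation.commutator_apply, pderiv_X, pderiv_X, Pi.single_apply, Pi.single_apply]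
      split_ifs <;> simp
  rw [← sub_eq_zero, ← Derivation.commutator_apply, h, Derivation.zero_apply]

section Homogeneous

variable {σ R M : Type*} [CommSemiring R] [AddCommMonoid M] [Module R M]

theorem linearMap_ext_of_isHomogeneous {f g : MvPolynomial σ R →ₗ[R] M}
    (h : ∀ m p, IsHomogeneous p m → f p = g p) : f = g := by
  refine LinearMap.ext fun p => ?_
  rw [← sum_homogeneousComponent p, map_sum, map_sum]
  exact sum_congr rfl fun m _ => h m _ (homogeneousComponent_isHomogeneous m p)

theorem IsHomogeneous.eq_C_coeff_zero {p : MvPolynomial σ R} (hp : p.IsHomogeneous 0) :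
    p = C (coeff 0 p) :=
  totalDegree_eq_zero_iff_eq_C.1 ((totalDegree_zero_iff_isHomogeneous _).2 hp)

theorem homogeneousComponent_apply_eq_apply_homogeneousComponent_succ
    (f : MvPolynomial σ R →ₗ[R] MvPolynomial σ R)
    (hf : ∀ m p, IsHomogeneous p (m + 1) → (f p).IsHomogeneous m) (hfC : ∀ c, f (C c) = 0)
    (m : ℕ) (p : MvPolynomial σ R) :
    homogeneousComponent m (f p) = f (homogeneousComponent (m + 1) p) := by
  refine LinearMap.congr_fun (linearMap_ext_of_isHomogeneous
    (f := homogeneousComponent m ∘ₗ f) (g := f ∘ₗ homogeneousComponent (m + 1)) ?_) p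
  rintro (_ | k) q hq
  · rw [LinearMap.comp_apply, LinearMap.comp_apply, homogeneousComponent_of_mem hq,
      if_neg (by omega), map_zero, hq.eq_C_coeff_zero, hfC, map_zero]
  · simp only [LinearMap.comp_apply, homogeneousComponent_of_mem (hf k q hq),
      homogeneousComponent_of_mem hq, add_left_inj]
    split_ifs <;> simp

theorem IsHomogeneous.inv_smul_sum_X_mul_pderiv {K : Type*} [Field K] [CharZero K] [Fintype σ]
    {m : ℕ} {r : MvPolynomial σ K} (hr : r.IsHomogeneous (m + 1)) :
    ((m : K) + 1)⁻¹ • ∑ i, X i * pderiv i r = r := by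
  rw [hr.sum_X_mul_pderiv, ← Nat.cast_smul_eq_nsmul K, smul_smul, Nat.cast_add_one,
    inv_mul_cancel₀ (Nat.cast_add_one_ne_zero m), one_smul]

instance {K : Type*} [Field K] [Finite σ] (m : ℕ) :
    FiniteDimensional K (homogeneousSubmodule σ K m) :=
  Submodule.finiteDimensional_of_le (S₂ := restrictTotalDegree σ K m)
    fun _ hp => (mem_restrictTotalDegree _ _ _).2 (IsHomogeneous.totalDegree_le hp)

end Homogeneous

section Graded

variable {σ R : Type*} [CommSemiring R]

attribute [local instance] decomposition

def gradedLinearEquiv (e : ∀ m, homogeneousSubmodule σ R m ≃ₗ[R] homogeneousSubmodule σ R m) :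
    MvPolynomial σ R ≃ₗ[R] MvPolynomial σ R :=
  (DirectSum.decomposeLinearEquiv _).trans
    ((DFinsupp.mapRange.linearEquiv e).trans (DirectSum.decomposeLinearEquiv _).symm)

theorem gradedLinearEquiv_apply_of_mem
    (e : ∀ m, homogeneousSubmodule σ R m ≃ₗ[R] homogeneousSubmodule σ R m) {m : ℕ}
    {p : MvPolynomial σ R} (hp : p ∈ homogeneousSubmodule σ R m) :
    gradedLinearEquiv e p = e m ⟨p, hp⟩ := by
  rw [gradedLinearEquiv, LinearEquiv.trans_apply, LinearEquiv.trans_apply,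
    DirectSum.decomposeLinearEquiv_apply, DirectSum.decompose_of_mem _ hp]
  have hof : DFinsupp.mapRange.linearEquiv e
      (DirectSum.of (fun i => homogeneousSubmodule σ R i) m ⟨p, hp⟩) =
        DirectSum.of (fun i => homogeneousSubmodule σ R i) m (e m ⟨p, hp⟩) :=
    DFinsupp.mapRange_single (hf := fun i => map_zero (e i))
  rw [hof, DirectSum.decomposeLinearEquiv_symm_apply, DirectSum.decompose_symm_of]

theorem exists_linearEquiv_rightInverse_of_bijOn (f : ℕ → MvPolynomial σ R →ₗ[R] MvPolynomial σ R)
    (hf : ∀ m, Set.BijOn (f m) (homogeneousSubmodule σ R m) (homogeneousSubmodule σ R m)) :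
    ∃ v : MvPolynomial σ R ≃ₗ[R] MvPolynomial σ R,
      ∀ m p, IsHomogeneous p m → (v p).IsHomogeneous m ∧ f m (v p) = p := by
  let e m := LinearEquiv.ofBijective ((f m).restrict (hf m).mapsTo) (hf m).bijective
  refine ⟨gradedLinearEquiv fun m => (e m).symm, fun m p hp => ?_⟩
  rw [gradedLinearEquiv_apply_of_mem _ hp]
  exact ⟨((e m).symm _).2, congrArg Subtype.val ((e m).apply_symm_apply ⟨p, hp⟩)⟩

end Graded

end MvPolynomial

section MatrixAct

variable {ι R M : Type*} [Fintype ι] [CommSemiring R] [AddCommMonoid M] [Module R M]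

def matrixAct (a : Matrix ι ι R) (f : M →ₗ[R] M) (ω : ι → M) : ι → M :=
  fun T => ∑ S, a T S • f (ω S)

theorem matrixAct_matrixAct (a b : Matrix ι ι R) (f h : M →ₗ[R] M) (ω : ι → M) :
    matrixAct a f (matrixAct b h ω) = matrixAct (a * b) (f ∘ₗ h) ω := by
  funext T
  simp only [matrixAct, map_sum, map_smul, Finset.smul_sum, smul_smul, Matrix.mul_apply,
    Finset.sum_smul, LinearMap.comp_apply]
  exact Finset.sum_comm

theorem matrixAct_one [DecidableEq ι] (f : M →ₗ[R] M) (ω : ι → M) :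
    matrixAct 1 f ω = f ∘ ω := by
  funext T
  simp [matrixAct, Matrix.one_apply]

theorem matrixAct_single [DecidableEq ι] (a : Matrix ι ι R) (f : M →ₗ[R] M) (S T : ι) (x : M) :
    matrixAct a f (Pi.single S x) T = a T S • f x := by
  rw [matrixAct, Finset.sum_eq_single S (fun U _ hU => by simp [hU]) (by simp)]
  simp

theorem compLeft_matrixAct (u : M →ₗ[R] M) (a : Matrix ι ι R) (f : M →ₗ[R] M) (ω : ι → M) :
    u.compLeft ι (matrixAct a f ω) = matrixAct a (u ∘ₗ f) ω := by
  funext T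
  simp [matrixAct]

end MatrixAct

section Forms

variable {n : ℕ}

theorem ksingle_eq_single (S : Finset (Fin n)) (p : MvPolynomial (Fin n) ℂ) :
    ksingle S p = Pi.single S p := by
  funext T
  simp [ksingle, Pi.single_apply]

theorem derham_eq_dkOf (ω : KForm n) : derham ω = dkOf (fun i => (pderiv i).toLinearMap) ω := rfl

theorem dkOf_singleton (A : Fin n → MvPolynomial (Fin n) ℂ →ₗ[ℂ] MvPolynomial (Fin n) ℂ)
    (ω : KForm n) (i : Fin n) : dkOf A ω {i} = A i (ω ∅) := by
  simp [dkOf, filter_singleton]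

theorem dkOf_pair (A : Fin n → MvPolynomial (Fin n) ℂ →ₗ[ℂ] MvPolynomial (Fin n) ℂ)
    (ω : KForm n) {a b : Fin n} (hab : a < b) :
    dkOf A ω {a, b} = A a (ω {b}) - A b (ω {a}) := by
  have hfa : ({a, b} : Finset (Fin n)).filter (· < a) = ∅ := by
    ext x; simp only [mem_filter, mem_insert, mem_singleton]; grind
  have hfb : ({a, b} : Finset (Fin n)).filter (· < b) = {a} := by
    ext x; simp only [mem_filter, mem_insert, mem_singleton]; grind
  rw [dkOf, sum_pair hab.ne, hfa, hfb, erase_insert (by simp [hab.ne]), pair_comm,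
    erase_insert (by simp [hab.ne'])]
  simp [sub_eq_add_neg]

def oneForm (q : Fin n → MvPolynomial (Fin n) ℂ) : KForm n :=
  ∑ j, ksingle {j} (q j)

theorem oneForm_singleton (q : Fin n → MvPolynomial (Fin n) ℂ) (i : Fin n) :
    oneForm q {i} = q i := by
  simp [oneForm, ksingle]

theorem oneForm_of_card_ne_one (q : Fin n → MvPolynomial (Fin n) ℂ) {S : Finset (Fin n)}
    (hS : S.card ≠ 1) : oneForm q S = 0 := by
  rw [oneForm, Finset.sum_apply]
  refine Finset.sum_eq_zero fun j _ => if_neg ?_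
  rintro rfl
  exact hS (card_singleton j)

theorem dkOf_oneForm {A : Fin n → MvPolynomial (Fin n) ℂ →ₗ[ℂ] MvPolynomial (Fin n) ℂ}
    {q : Fin n → MvPolynomial (Fin n) ℂ} (hq : ∀ i j, A i (q j) = A j (q i)) :
    dkOf A (oneForm q) = 0 := by
  funext T
  by_cases hT : T.card = 2
  · obtain ⟨a, b, hab, rfl⟩ := card_eq_two.1 hT
    rcases hab.lt_or_gt with h | h
    · rw [dkOf_pair A _ h, oneForm_singleton, oneForm_singleton, hq, sub_self, Pi.zero_apply]
    · rw [pair_comm, dkOf_pair A _ h, oneForm_singleton, oneForm_singleton, hq, sub_self,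
        Pi.zero_apply]
  · refine Finset.sum_eq_zero fun i hi => ?_
    rw [oneForm_of_card_ne_one q (by rw [card_erase_of_mem hi]; have := card_pos.2 ⟨i, hi⟩; omega),
      map_zero, smul_zero]

theorem dkOf_compLeft_iff {A B : Fin n → MvPolynomial (Fin n) ℂ →ₗ[ℂ] MvPolynomial (Fin n) ℂ}
    {u : MvPolynomial (Fin n) ℂ →ₗ[ℂ] MvPolynomial (Fin n) ℂ} :
    (∀ ω, dkOf A (u.compLeft _ ω) = u.compLeft _ (dkOf B ω)) ↔ ∀ i p, A i (u p) = u (B i p) := by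
  refine ⟨fun h i p => ?_, fun h ω => ?_⟩
  · simpa [dkOf_singleton, ksingle_eq_single] using congrFun (h (Pi.single ∅ p)) {i}
  · funext T
    simp [dkOf, h]

end Forms

section IntertwinerInv

variable {σ K : Type*} [Fintype σ] [Field K]

def intertwinerInv (D : σ → MvPolynomial σ K →ₗ[K] MvPolynomial σ K) :
    ℕ → MvPolynomial σ K →ₗ[K] MvPolynomial σ K
  | 0 => LinearMap.id
  | m + 1 => ((m : K) + 1)⁻¹ • ∑ i, LinearMap.mulLeft K (X i) ∘ₗ intertwinerInv D m ∘ₗ D i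

variable {D : σ → MvPolynomial σ K →ₗ[K] MvPolynomial σ K}

theorem intertwinerInv_zero : intertwinerInv D 0 = LinearMap.id := rfl

theorem intertwinerInv_succ_apply (m : ℕ) (p : MvPolynomial σ K) :
    intertwinerInv D (m + 1) p = ((m : K) + 1)⁻¹ • ∑ i, X i * intertwinerInv D m (D i p) := by
  simp [intertwinerInv]

theorem isHomogeneous_intertwinerInv
    (hD : ∀ i m p, IsHomogeneous p (m + 1) → (D i p).IsHomogeneous m) {m : ℕ}
    {p : MvPolynomial σ K} (hp : p.IsHomogeneous m) : (intertwinerInv D m p).IsHomogeneous m := by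
  induction m generalizing p with
  | zero => exact hp
  | succ m ih =>
    rw [intertwinerInv_succ_apply, ← mem_homogeneousSubmodule]
    refine Submodule.smul_mem _ _ (Submodule.sum_mem _ fun i _ => ?_)
    rw [mem_homogeneousSubmodule, add_comm]
    exact (isHomogeneous_X K i).mul (ih (hD i m p hp))

theorem pderiv_intertwinerInv_succ_apply (i : σ) (m : ℕ) (p : MvPolynomial σ K) :
    pderiv i (intertwinerInv D (m + 1) p) = ((m : K) + 1)⁻¹ •
      (intertwinerInv D m (D i p) + ∑ j, X j * pderiv i (intertwinerInv D m (D j p))) := by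
  classical
  have hX j : pderiv i (X j : MvPolynomial σ K) = if j = i then 1 else 0 := by
    rw [pderiv_X, Pi.single_apply]
  simp [intertwinerInv_succ_apply, sum_add_distrib, hX, add_comm]

theorem pderiv_intertwinerInv [CharZero K]
    (hD : ∀ i m p, IsHomogeneous p (m + 1) → (D i p).IsHomogeneous m)
    (hcomm : ∀ i j p, D i (D j p) = D j (D i p)) {m : ℕ} {p : MvPolynomial σ K}
    (hp : p.IsHomogeneous (m + 1)) (i : σ) :
    pderiv i (intertwinerInv D (m + 1) p) = intertwinerInv D m (D i p) := by
  induction m generalizing p with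
  | zero =>
    have hconst j : pderiv i (D j p) = 0 := by
      rw [(hD j 0 p hp).eq_C_coeff_zero, pderiv_C]
    simp [pderiv_intertwinerInv_succ_apply, intertwinerInv_zero, hconst]
  | succ m ih =>
    have hsum : ∑ j, X j * pderiv i (intertwinerInv D (m + 1) (D j p)) =
        ((m : K) + 1) • intertwinerInv D (m + 1) (D i p) := by
      simp_rw [ih (hD _ _ p hp), hcomm i, intertwinerInv_succ_apply (D := D) m (D i p), smul_smul,
        mul_inv_cancel₀ (Nat.cast_add_one_ne_zero (R := K) m), one_smul]
    rw [pderiv_intertwinerInv_succ_apply, hsum, inv_smul_eq_iff₀ (Nat.cast_add_one_ne_zero _)]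
    push_cast
    module

theorem intertwinerInv_apply_of_intertwines [CharZero K]
    {u : MvPolynomial σ K →ₗ[K] MvPolynomial σ K} (hC : ∀ c, u (C c) = C c)
    (hD : ∀ i p, D i (u p) = u (pderiv i p)) {m : ℕ}
    {p : MvPolynomial σ K} (hp : p.IsHomogeneous m) : intertwinerInv D m (u p) = p := by
  induction m generalizing p with
  | zero => rw [hp.eq_C_coeff_zero, hC]; rfl
  | succ m ih =>
    have hpd (i : σ) : (pderiv i p).IsHomogeneous m := by simpa using hp.pderiv
    simp_rw [intertwinerInv_succ_apply, hD, ih (hpd _)]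
    exact hp.inv_smul_sum_X_mul_pderiv

structure IsIntertwiner (D : σ → MvPolynomial σ K →ₗ[K] MvPolynomial σ K)
    (u : MvPolynomial σ K →ₗ[K] MvPolynomial σ K) : Prop where
  isHomogeneous_apply {m : ℕ} {p : MvPolynomial σ K} : p.IsHomogeneous m → (u p).IsHomogeneous m
  apply_C (c : K) : u (C c) = C c
  apply_comp (i : σ) (p : MvPolynomial σ K) : D i (u p) = u (pderiv i p)

theorem IsIntertwiner.eq_of_injOn [CharZero K]
    (hinj : ∀ m, Set.InjOn (intertwinerInv D m) (homogeneousSubmodule σ K m))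
    {u u' : MvPolynomial σ K →ₗ[K] MvPolynomial σ K} (hu : IsIntertwiner D u)
    (hu' : IsIntertwiner D u') : u = u' :=
  linearMap_ext_of_isHomogeneous fun m _ hp =>
    hinj m (hu.isHomogeneous_apply hp) (hu'.isHomogeneous_apply hp) <| by
      rw [intertwinerInv_apply_of_intertwines hu.apply_C hu.apply_comp hp,
        intertwinerInv_apply_of_intertwines hu'.apply_C hu'.apply_comp hp]

theorem isIntertwiner_of_intertwinerInv_apply [CharZero K]
    (hD : ∀ i m p, IsHomogeneous p (m + 1) → (D i p).IsHomogeneous m)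
    (hDC : ∀ i c, D i (C c) = 0) (hcomm : ∀ i j p, D i (D j p) = D j (D i p))
    (hinj : ∀ m, Set.InjOn (intertwinerInv D m) (homogeneousSubmodule σ K m))
    {u : MvPolynomial σ K →ₗ[K] MvPolynomial σ K}
    (hu : ∀ m p, IsHomogeneous p m → (u p).IsHomogeneous m ∧ intertwinerInv D m (u p) = p) :
    IsIntertwiner D u where
  isHomogeneous_apply hp := (hu _ _ hp).1
  apply_C c := (hu 0 (C c) (isHomogeneous_C _ c)).2
  apply_comp i := LinearMap.congr_fun <| linearMap_ext_of_isHomogeneous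
    (f := D i ∘ₗ u) (g := u ∘ₗ (pderiv i).toLinearMap) <| by
    rintro (_ | m) p hp
    · have hC := (hu 0 (C (coeff 0 p)) (isHomogeneous_C _ _)).2
      rw [intertwinerInv_zero, LinearMap.id_apply] at hC
      rw [hp.eq_C_coeff_zero, LinearMap.comp_apply, hC, hDC]
      simp
    · have hup := hu _ _ hp
      have hdp := hu m _ (by simpa using hp.pderiv (i := i))
      refine hinj m (hD i m _ hup.1) hdp.1 ?_
      change intertwinerInv D m (D i (u p)) = intertwinerInv D m (u (pderiv i p))
      rw [← pderiv_intertwinerInv hD hcomm hup.1, hup.2, hdp.2]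

end IntertwinerInv

section Regular

variable {n : ℕ} {Top : Fin n → MvPolynomial (Fin n) ℂ →ₗ[ℂ] MvPolynomial (Fin n) ℂ}

/-- `(K^•, d(k))` is acyclic in positive degrees. -/
def IsRegularParameter (Top : Fin n → MvPolynomial (Fin n) ℂ →ₗ[ℂ] MvPolynomial (Fin n) ℂ) : Prop :=
  ∀ ω : KForm n, ω ∅ = 0 → dkOf Top ω = 0 → ∃ η : KForm n, dkOf Top η = ω

theorem IsRegularParameter.exists_isHomogeneous_apply_eq (hreg : IsRegularParameter Top)
    (hTdeg : ∀ i m p, IsHomogeneous p (m + 1) → (Top i p).IsHomogeneous m)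
    (hT0 : ∀ i c, Top i (C c) = 0) {m : ℕ} {q : Fin n → MvPolynomial (Fin n) ℂ}
    (hq : ∀ j, (q j).IsHomogeneous m) (hclosed : ∀ i j, Top i (q j) = Top j (q i)) :
    ∃ p : MvPolynomial (Fin n) ℂ, p.IsHomogeneous (m + 1) ∧ ∀ i, Top i p = q i := by
  obtain ⟨η, hη⟩ := hreg (oneForm q) (oneForm_of_card_ne_one q (by simp)) (dkOf_oneForm hclosed)
  refine ⟨homogeneousComponent (m + 1) (η ∅), homogeneousComponent_isHomogeneous _ _, fun i => ?_⟩
  rw [← homogeneousComponent_apply_eq_apply_homogeneousComponent_succ _ (hTdeg i) (hT0 i),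
    ← dkOf_singleton, hη, oneForm_singleton, homogeneousComponent_of_mem (hq i), if_pos rfl]

theorem apply_comm_of_intertwinerInv_eq_pderiv
    (hTdeg : ∀ i m p, IsHomogeneous p (m + 1) → (Top i p).IsHomogeneous m)
    (hT0 : ∀ i c, Top i (C c) = 0) (hTcomm : ∀ i j p, Top i (Top j p) = Top j (Top i p))
    {m : ℕ} (hinj : ∀ k, k + 1 = m →
      Set.InjOn (intertwinerInv Top k) (homogeneousSubmodule (Fin n) ℂ k))
    {r : MvPolynomial (Fin n) ℂ} {q : Fin n → MvPolynomial (Fin n) ℂ}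
    (hq : ∀ j, (q j).IsHomogeneous m) (hWq : ∀ j, intertwinerInv Top m (q j) = pderiv j r)
    (i j : Fin n) : Top i (q j) = Top j (q i) := by
  cases m with
  | zero => rw [(hq j).eq_C_coeff_zero, (hq i).eq_C_coeff_zero, hT0, hT0]
  | succ k =>
    refine hinj k rfl (hTdeg i k _ (hq j)) (hTdeg j k _ (hq i)) ?_
    rw [← pderiv_intertwinerInv hTdeg hTcomm (hq j), ← pderiv_intertwinerInv hTdeg hTcomm (hq i),
      hWq, hWq, pderiv_pderiv_comm]

theorem surjOn_intertwinerInv_succ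
    (hTdeg : ∀ i m p, IsHomogeneous p (m + 1) → (Top i p).IsHomogeneous m)
    (hT0 : ∀ i c, Top i (C c) = 0) (hTcomm : ∀ i j p, Top i (Top j p) = Top j (Top i p))
    (hreg : IsRegularParameter Top) {m : ℕ}
    (hsurj : Set.SurjOn (intertwinerInv Top m) (homogeneousSubmodule (Fin n) ℂ m)
      (homogeneousSubmodule (Fin n) ℂ m))
    (hinj : ∀ k, k + 1 = m →
      Set.InjOn (intertwinerInv Top k) (homogeneousSubmodule (Fin n) ℂ k)) :
    Set.SurjOn (intertwinerInv Top (m + 1)) (homogeneousSubmodule (Fin n) ℂ (m + 1))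
      (homogeneousSubmodule (Fin n) ℂ (m + 1)) := by
  intro r (hr : r.IsHomogeneous (m + 1))
  choose q hq hWq using fun j => hsurj (show (pderiv j r).IsHomogeneous m by simpa using hr.pderiv)
  obtain ⟨p, hp, hTp⟩ := hreg.exists_isHomogeneous_apply_eq hTdeg hT0 hq
    (apply_comm_of_intertwinerInv_eq_pderiv hTdeg hT0 hTcomm hinj hq hWq)
  refine ⟨p, hp, ?_⟩
  simp_rw [intertwinerInv_succ_apply, hTp, hWq]
  exact hr.inv_smul_sum_X_mul_pderiv

theorem bijOn_intertwinerInv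
    (hTdeg : ∀ i m p, IsHomogeneous p (m + 1) → (Top i p).IsHomogeneous m)
    (hT0 : ∀ i c, Top i (C c) = 0) (hTcomm : ∀ i j p, Top i (Top j p) = Top j (Top i p))
    (hreg : IsRegularParameter Top) (m : ℕ) :
    Set.BijOn (intertwinerInv Top m) (homogeneousSubmodule (Fin n) ℂ m)
      (homogeneousSubmodule (Fin n) ℂ m) := by
  induction m using Nat.strong_induction_on with
  | _ m ih =>
    have hmaps : Set.MapsTo (intertwinerInv Top m) (homogeneousSubmodule (Fin n) ℂ m)
        (homogeneousSubmodule (Fin n) ℂ m) := fun _ hp => isHomogeneous_intertwinerInv hTdeg hp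
    have hsurj : Set.SurjOn (intertwinerInv Top m) (homogeneousSubmodule (Fin n) ℂ m)
        (homogeneousSubmodule (Fin n) ℂ m) := by
      cases m with
      | zero => exact fun p hp => ⟨p, hp, rfl⟩
      | succ m =>
        exact surjOn_intertwinerInv_succ hTdeg hT0 hTcomm hreg (ih m (by omega)).surjOn
          fun k hk => (ih k (by omega)).injOn
    exact ⟨hmaps, (LinearMap.injOn_iff_surjOn hmaps).2 hsurj, hsurj⟩

end Regular

section Intertwiner

variable {n : ℕ} {Top : Fin n → MvPolynomial (Fin n) ℂ →ₗ[ℂ] MvPolynomial (Fin n) ℂ}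

theorem eq_compLeft_of_ksingle {V : KForm n →ₗ[ℂ] KForm n}
    (hV : ∀ p S, V (ksingle S p) = ksingle S (V (ksingle ∅ p) ∅)) :
    V = (LinearMap.proj ∅ ∘ₗ V ∘ₗ LinearMap.single ℂ _ ∅).compLeft _ := by
  refine LinearMap.pi_ext fun S p => ?_
  rw [← ksingle_eq_single, hV]
  funext T
  by_cases hT : T = S <;> simp [ksingle, ksingle_eq_single, hT]

theorem vProps_compLeft_iff {u : MvPolynomial (Fin n) ℂ →ₗ[ℂ] MvPolynomial (Fin n) ℂ} :
    VProps Top (u.compLeft _) ↔ IsIntertwiner Top u := by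
  refine ⟨fun ⟨hhom, hC, _, hd⟩ => ⟨fun {m p} hp => ?_, fun c => ?_, dkOf_compLeft_iff.1 hd⟩,
    fun hu => ⟨fun l m ω hω S => ?_, fun S c => ?_, fun p S => ?_,
      dkOf_compLeft_iff.2 hu.apply_comp⟩⟩
  · have h0 : InKlm 0 m (ksingle ∅ p) := fun S => by
      rcases eq_or_ne S ∅ with rfl | hS <;> simp_all [ksingle]
    simpa [ksingle] using (hhom 0 m _ h0 ∅).1 rfl
  · simpa [ksingle] using congrFun (hC ∅ c) ∅
  · exact ⟨fun h => hu.isHomogeneous_apply ((hω S).1 h), fun h => by simp [(hω S).2 h]⟩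
  · funext T
    by_cases hT : T = S <;> simp [ksingle, hT, hu.apply_C]
  · funext T
    by_cases hT : T = S <;> simp [ksingle, hT]

theorem VProps.eq_compLeft
    (hinj : ∀ m, Set.InjOn (intertwinerInv Top m) (homogeneousSubmodule (Fin n) ℂ m))
    {u : MvPolynomial (Fin n) ℂ →ₗ[ℂ] MvPolynomial (Fin n) ℂ} (hu : IsIntertwiner Top u)
    {V : KForm n →ₗ[ℂ] KForm n} (hV : VProps Top V) : V = u.compLeft _ := by
  have hVu := eq_compLeft_of_ksingle hV.2.2.1
  rw [hVu] at hV
  rw [hVu, (vProps_compLeft_iff.1 hV).eq_of_injOn hinj hu]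

end Intertwiner

section Equivariance

variable {n : ℕ} {Top : Fin n → MvPolynomial (Fin n) ℂ →ₗ[ℂ] MvPolynomial (Fin n) ℂ}
  {G : Type*} {actP : G → MvPolynomial (Fin n) ℂ →ₐ[ℂ] MvPolynomial (Fin n) ℂ}
  {actL : G → Matrix (Finset (Fin n)) (Finset (Fin n)) ℂ} {actK : G → KForm n → KForm n}

theorem actK_eq_matrixAct (hactK : ∀ g ω T, actK g ω T = ∑ S, actL g T S • actP g (ω S)) (g : G) :
    actK g = matrixAct (actL g) (actP g).toLinearMap :=
  funext fun ω => funext fun T => hactK g ω T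

variable [Group G]

theorem actL_inv_mul (hactK : ∀ g ω T, actK g ω T = ∑ S, actL g T S • actP g (ω S))
    (hactK1 : ∀ ω, actK 1 ω = ω) (hactKmul : ∀ g h ω, actK g (actK h ω) = actK (g * h) ω)
    (g : G) : actL g⁻¹ * actL g = 1 := by
  ext T S
  have h := congrFun (hactKmul g⁻¹ g (Pi.single S 1)) T
  rw [inv_mul_cancel, hactK1, actK_eq_matrixAct hactK, actK_eq_matrixAct hactK,
    matrixAct_matrixAct, matrixAct_single] at h
  apply C_injective (Fin n) ℂ
  by_cases hT : T = S <;> simp_all [Matrix.one_apply, smul_eq_C_mul]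

theorem actK_inv_compLeft_actK (hactK : ∀ g ω T, actK g ω T = ∑ S, actL g T S • actP g (ω S))
    (hactK1 : ∀ ω, actK 1 ω = ω) (hactKmul : ∀ g h ω, actK g (actK h ω) = actK (g * h) ω)
    (u : MvPolynomial (Fin n) ℂ →ₗ[ℂ] MvPolynomial (Fin n) ℂ) (g : G) (ω : KForm n) :
    actK g⁻¹ (u.compLeft _ (actK g ω)) =
      ((actP g⁻¹).toLinearMap ∘ₗ u ∘ₗ (actP g).toLinearMap).compLeft _ ω := by
  rw [actK_eq_matrixAct hactK, actK_eq_matrixAct hactK, compLeft_matrixAct, matrixAct_matrixAct,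
    actL_inv_mul hactK hactK1 hactKmul, matrixAct_one]
  rfl

theorem IsIntertwiner.conj_actP
    (hactPdeg : ∀ g m p, IsHomogeneous p m → (actP g p).IsHomogeneous m)
    (hactK : ∀ g ω T, actK g ω T = ∑ S, actL g T S • actP g (ω S))
    (hactK1 : ∀ ω, actK 1 ω = ω) (hactKmul : ∀ g h ω, actK g (actK h ω) = actK (g * h) ω)
    (hequiv0 : ∀ g ω, actK g (derham ω) = derham (actK g ω))
    (hequivk : ∀ g ω, actK g (dkOf Top ω) = dkOf Top (actK g ω))
    {u : MvPolynomial (Fin n) ℂ →ₗ[ℂ] MvPolynomial (Fin n) ℂ} (hu : IsIntertwiner Top u) (g : G) :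
    IsIntertwiner Top ((actP g⁻¹).toLinearMap ∘ₗ u ∘ₗ (actP g).toLinearMap) where
  isHomogeneous_apply hp := hactPdeg _ _ _ (hu.isHomogeneous_apply (hactPdeg _ _ _ hp))
  apply_C c := by simp [algHom_C, hu.apply_C]
  apply_comp := dkOf_compLeft_iff.1 fun ω => by
    rw [← actK_inv_compLeft_actK hactK hactK1 hactKmul, ← hequivk,
      dkOf_compLeft_iff.2 hu.apply_comp, ← derham_eq_dkOf, ← hequiv0,
      actK_inv_compLeft_actK hactK hactK1 hactKmul]
    rfl

theorem IsIntertwiner.actK_compLeft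
    (hactPdeg : ∀ g m p, IsHomogeneous p m → (actP g p).IsHomogeneous m)
    (hactK : ∀ g ω T, actK g ω T = ∑ S, actL g T S • actP g (ω S))
    (hactK1 : ∀ ω, actK 1 ω = ω) (hactKmul : ∀ g h ω, actK g (actK h ω) = actK (g * h) ω)
    (hequiv0 : ∀ g ω, actK g (derham ω) = derham (actK g ω))
    (hequivk : ∀ g ω, actK g (dkOf Top ω) = dkOf Top (actK g ω))
    (hinj : ∀ m, Set.InjOn (intertwinerInv Top m) (homogeneousSubmodule (Fin n) ℂ m))
    {u : MvPolynomial (Fin n) ℂ →ₗ[ℂ] MvPolynomial (Fin n) ℂ} (hu : IsIntertwiner Top u) (g : G)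
    (ω : KForm n) : actK g (u.compLeft _ ω) = u.compLeft _ (actK g ω) := by
  have hconj := (hu.conj_actP hactPdeg hactK hactK1 hactKmul hequiv0 hequivk g).eq_of_injOn hinj hu
  rw [← hactK1 (u.compLeft _ (actK g ω)), ← mul_inv_cancel g, ← hactKmul,
    actK_inv_compLeft_actK hactK hactK1 hactKmul, hconj]

end Equivariance

theorem stmt10_general (n : ℕ)
    -- the (commuting) Dunkl operators of `G`, homogeneous of degree −1
    (Top : Fin n → MvPolynomial (Fin n) ℂ →ₗ[ℂ] MvPolynomial (Fin n) ℂ)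
    (hTcomm : ∀ (i j : Fin n) (p : MvPolynomial (Fin n) ℂ), Top i (Top j p) = Top j (Top i p))
    (hTdeg : ∀ (i : Fin n) (m : ℕ) (p : MvPolynomial (Fin n) ℂ),
      p.IsHomogeneous (m + 1) → (Top i p).IsHomogeneous m)
    (hT0 : ∀ (i : Fin n) (c : ℂ), Top i (C c) = 0)
    -- the finite complex reflection group `G`, acting diagonally on `K^•`:
    -- on polynomials by `actP`, on the exterior factor with matrix coefficients `actΛ`
    (G : Type) [Group G]
    (actP : G → MvPolynomial (Fin n) ℂ →ₐ[ℂ] MvPolynomial (Fin n) ℂ)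
    (hactPdeg : ∀ (g : G) (m : ℕ) (p : MvPolynomial (Fin n) ℂ),
      p.IsHomogeneous m → (actP g p).IsHomogeneous m)
    (actL : G → Finset (Fin n) → Finset (Fin n) → ℂ)
    (actK : G → KForm n → KForm n)
    (hactK : ∀ (g : G) (ω : KForm n) (T : Finset (Fin n)),
      actK g ω T = ∑ S : Finset (Fin n), actL g T S • actP g (ω S))
    (hactK1 : ∀ ω : KForm n, actK 1 ω = ω)
    (hactKmul : ∀ (g h : G) (ω : KForm n), actK g (actK h ω) = actK (g * h) ω)
    -- the differentials are `G`-equivariant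
    (hequiv0 : ∀ (g : G) (ω : KForm n), actK g (derham ω) = derham (actK g ω))
    (hequivk : ∀ (g : G) (ω : KForm n), actK g (dkOf Top ω) = dkOf Top (actK g ω))
    -- `k` is regular: the positive-degree cohomology of `(K^•, d(k))` vanishes
    (hreg : ∀ ω : KForm n, ω ∅ = 0 → dkOf Top ω = 0 → ∃ η : KForm n, dkOf Top η = ω) :
    -- existence
    (∃ V : KForm n →ₗ[ℂ] KForm n, VProps Top V) ∧
    -- uniqueness
    (∀ V V' : KForm n →ₗ[ℂ] KForm n, VProps Top V → VProps Top V' → V = V') ∧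
    -- each such `𝒱(k)` is a `G`-equivariant linear isomorphism intertwining `∂_ξ`
    -- with `T_ξ(k)` on `P`
    (∀ V : KForm n →ₗ[ℂ] KForm n, VProps Top V →
      Function.Bijective V ∧
      (∀ (g : G) (ω : KForm n), actK g (V ω) = V (actK g ω)) ∧
      (∀ (p : MvPolynomial (Fin n) ℂ) (i : Fin n),
        Top i (V (ksingle ∅ p) ∅) = V (ksingle ∅ ((pderiv i) p)) ∅)) := by
  have hbij := bijOn_intertwinerInv hTdeg hT0 hTcomm hreg
  have hinj m := (hbij m).injOn
  obtain ⟨v, hv⟩ := exists_linearEquiv_rightInverse_of_bijOn _ hbij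
  have hvI : IsIntertwiner Top v.toLinearMap :=
    isIntertwiner_of_intertwinerInv_apply hTdeg hT0 hTcomm hinj hv
  have hV : ∀ V, VProps Top V → V = v.toLinearMap.compLeft _ := fun V => VProps.eq_compLeft hinj hvI
  refine ⟨⟨_, vProps_compLeft_iff.2 hvI⟩, fun V V' h h' => (hV V h).trans (hV V' h').symm,
    fun V h => ?_⟩
  obtain rfl := hV V h
  refine ⟨v.bijective.comp_left,
    hvI.actK_compLeft hactPdeg hactK hactK1 hactKmul hequiv0 hequivk hinj, fun p i => ?_⟩
  simpa [ksingle] using hvI.apply_comp i p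

/-- for a regular parameter `k` (the positive-degree cohomology of the
deformed De Rham complex vanishes), the intertwiner `𝒱(k)` exists, is unique, and is a
`G`-equivariant linear isomorphism of `P ⊗ Λ^•V*`, whose restriction to `P` satisfies
`T_ξ(k)𝒱(k) = 𝒱(k)∂_ξ`. -/
theorem stmt10 (n : ℕ)
    -- the (commuting) Dunkl operators of `G`, homogeneous of degree −1
    (Top : Fin n → MvPolynomial (Fin n) ℂ →ₗ[ℂ] MvPolynomial (Fin n) ℂ)
    (hTcomm : ∀ (i j : Fin n) (p : MvPolynomial (Fin n) ℂ), Top i (Top j p) = Top j (Top i p))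
    (hTdeg : ∀ (i : Fin n) (m : ℕ) (p : MvPolynomial (Fin n) ℂ),
      p.IsHomogeneous (m + 1) → (Top i p).IsHomogeneous m)
    (hT0 : ∀ (i : Fin n) (c : ℂ), Top i (C c) = 0)
    -- the finite complex reflection group `G`, acting diagonally on `K^•`:
    -- on polynomials by `actP`, on the exterior factor with matrix coefficients `actΛ`
    (G : Type) [Group G] [Finite G]
    (actP : G → MvPolynomial (Fin n) ℂ →ₐ[ℂ] MvPolynomial (Fin n) ℂ)
    (hactPdeg : ∀ (g : G) (m : ℕ) (p : MvPolynomial (Fin n) ℂ),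
      p.IsHomogeneous m → (actP g p).IsHomogeneous m)
    (actL : G → Finset (Fin n) → Finset (Fin n) → ℂ)
    (hactLcard : ∀ (g : G) (S T : Finset (Fin n)), S.card ≠ T.card → actL g S T = 0)
    (actK : G → KForm n → KForm n)
    (hactK : ∀ (g : G) (ω : KForm n) (T : Finset (Fin n)),
      actK g ω T = ∑ S : Finset (Fin n), actL g T S • actP g (ω S))
    (hactK1 : ∀ ω : KForm n, actK 1 ω = ω)
    (hactKmul : ∀ (g h : G) (ω : KForm n), actK g (actK h ω) = actK (g * h) ω)
    -- the differentials are `G`-equivariant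
    (hequiv0 : ∀ (g : G) (ω : KForm n), actK g (derham ω) = derham (actK g ω))
    (hequivk : ∀ (g : G) (ω : KForm n), actK g (dkOf Top ω) = dkOf Top (actK g ω))
    -- `k` is regular: the positive-degree cohomology of `(K^•, d(k))` vanishes
    (hreg : ∀ ω : KForm n, ω ∅ = 0 → dkOf Top ω = 0 → ∃ η : KForm n, dkOf Top η = ω) :
    -- existence
    (∃ V : KForm n →ₗ[ℂ] KForm n, VProps Top V) ∧
    -- uniqueness
    (∀ V V' : KForm n →ₗ[ℂ] KForm n, VProps Top V → VProps Top V' → V = V') ∧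
    -- each such `𝒱(k)` is a `G`-equivariant linear isomorphism intertwining `∂_ξ`
    -- with `T_ξ(k)` on `P`
    (∀ V : KForm n →ₗ[ℂ] KForm n, VProps Top V →
      Function.Bijective V ∧
      (∀ (g : G) (ω : KForm n), actK g (V ω) = V (actK g ω)) ∧
      (∀ (p : MvPolynomial (Fin n) ℂ) (i : Fin n),
        Top i (V (ksingle ∅ p) ∅) = V (ksingle ∅ ((pderiv i) p)) ∅)) :=
  stmt10_general n Top hTcomm hTdeg hT0 G actP hactPdeg actL actK hactK hactK1 hactKmul hequiv0
    hequivk hreg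
end
end
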